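/- Let I=(V,E,𝔗,d) be a Steiner Forest instance, F a feasible solution, and A a feasible tree solution with V[A]=V[F] that is edge/set swap-optimal with respect to F and the potential φ. Let S ∈ 𝔖∖{S_u} be an equivalence class of safe edges with edges e_1,…,e_{ℓ(S)}, and let f ∈ F be an edge closing a cycle in A that contains S. Then d_f ≥ (1/3)·(Σ_{i=1}^{ℓ(S)} d_{e_i} − Σ_{i∈In_S} w(E_{S,i})). -/

import Mathlib

open Finset

attribute [local instance] Classical.propDecidable

variable {V : Type*} [Fintype V] [DecidableEq V]

/-- The simple graph on `V` induced by a finite set of (undirected) edges. -/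
def graphOf (F : Finset (Sym2 V)) : SimpleGraph V where
  Adj u v := u ≠ v ∧ s(u, v) ∈ F
  symm := by
    constructor
    intro u v h
    refine ⟨Ne.symm h.1, ?_⟩
    rw [Sym2.eq_swap]
    exact h.2
  loopless := by constructor; intro v h; exact h.1 rfl

/-- The set of vertices incident to at least one edge of `F` (denoted `V[F]` in the paper). -/
def supp (F : Finset (Sym2 V)) : Set V := {v | ∃ e ∈ F, v ∈ e}

/-- A Steiner forest `F` is feasible for the terminal pairs `T` if it connects every pair. -/
def Feasible (F : Finset (Sym2 V)) (T : Finset (V × V)) : Prop :=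
  ∀ p ∈ T, (graphOf F).Reachable p.1 p.2

/-- Total edge cost `d(F)`. -/
def cost (d : Sym2 V → ℝ) (F : Finset (Sym2 V)) : ℝ := ∑ e ∈ F, d e

/-- `A` is a tree (on its vertex support): loopless edges, acyclic, connected on `V[A]`. -/
def IsTreeSol (A : Finset (Sym2 V)) : Prop :=
  (∀ e ∈ A, ¬ e.IsDiag) ∧ (graphOf A).IsAcyclic ∧
    ∀ u ∈ supp A, ∀ v ∈ supp A, (graphOf A).Reachable u v

/-- Shortest-path distance between `u` and `v` in the graph with edge set `Eall`
and edge lengths `d`. -/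
noncomputable def wdist (Eall : Finset (Sym2 V)) (d : Sym2 V → ℝ) (u v : V) : ℝ :=
  ⨅ p : (graphOf Eall).Walk u v, (p.edges.map d).sum

/-- Width of a vertex set `W`: the largest shortest-path distance of a terminal pair
whose two members both lie in `W`. -/
noncomputable def widthSet (Eall : Finset (Sym2 V)) (d : Sym2 V → ℝ) (T : Finset (V × V))
    (W : Set V) : ℝ :=
  sSup {x : ℝ | ∃ p ∈ T, p.1 ∈ W ∧ p.2 ∈ W ∧ x = wdist Eall d p.1 p.2}

/-- Total width `w(F)`: the sum of the widths of the connected components of `F`. -/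
noncomputable def totalWidth (Eall : Finset (Sym2 V)) (d : Sym2 V → ℝ) (T : Finset (V × V))
    (F : Finset (Sym2 V)) : ℝ :=
  ∑ᶠ c : (graphOf F).ConnectedComponent, widthSet Eall d T c.supp

/-- The potential `φ(F) = d(F) + w(F)`. -/
noncomputable def phi (Eall : Finset (Sym2 V)) (d : Sym2 V → ℝ) (T : Finset (V × V))
    (F : Finset (Sym2 V)) : ℝ :=
  cost d F + totalWidth Eall d T F

/-- Some edge of `F` leaves the vertex set `W`. -/
def leavesSet (F : Finset (Sym2 V)) (W : Set V) : Prop :=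
  ∃ g ∈ F, ∃ x y : V, g = s(x, y) ∧ x ∈ W ∧ y ∉ W

/-- `T_{e,f}`: the connected component of `A ∖ {e,f}` containing the interior of the
unique `e`–`f` path of the tree `A`; equivalently, the component containing an endpoint
of `e` together with an endpoint of `f`. -/
def midComp (A : Finset (Sym2 V)) (e f : Sym2 V) : Set V :=
  {v | ∃ x ∈ e, ∃ y ∈ f,
    (graphOf (A \ {e, f})).Reachable x y ∧ (graphOf (A \ {e, f})).Reachable x v}

/-- `e` and `f` are compatible w.r.t. `F` (`e ~cp f`). -/
def Compatible (A F : Finset (Sym2 V)) (e f : Sym2 V) : Prop :=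
  e = f ∨ ¬ leavesSet F (midComp A e f)

/-- `e` is safe: some `F`-edge crosses between the two components of `A ∖ {e}`. -/
def Safe (A F : Finset (Sym2 V)) (e : Sym2 V) : Prop :=
  ∃ g ∈ F, ∃ x y : V, g = s(x, y) ∧ x ≠ y ∧ ¬ (graphOf (A.erase e)).Reachable x y

/-- `e` is essential: removing it from `A` destroys feasibility. -/
def Essential (A : Finset (Sym2 V)) (T : Finset (V × V)) (e : Sym2 V) : Prop :=
  ¬ Feasible (A.erase e) T

/-- The compatibility class of the edge `e` of `A`. -/
noncomputable def cls (A F : Finset (Sym2 V)) (e : Sym2 V) : Finset (Sym2 V) :=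
  A.filter (fun f => Compatible A F e f)

/-- `S_u`: the set of unsafe edges of `A`. -/
noncomputable def unsafeCls (A F : Finset (Sym2 V)) : Finset (Sym2 V) :=
  A.filter (fun e => ¬ Safe A F e)

/-- `𝔖`: the set of compatibility classes of edges of `A`. -/
noncomputable def classes (A F : Finset (Sym2 V)) : Finset (Finset (Sym2 V)) :=
  A.image (cls A F)

/-- `e` lies on the fundamental cycle closed by adding the edge `f` to the tree `A`. -/
def onFundCycle (A : Finset (Sym2 V)) (f e : Sym2 V) : Prop :=
  e ∈ A ∧ ∀ x y : V, f = s(x, y) →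
    (graphOf A).Reachable x y ∧ ¬ (graphOf (A.erase e)).Reachable x y

/-- Edge/edge swap optimality of `A` w.r.t. added edges from `Eadd` and objective `obj`:
no swap that adds an edge `f ∈ Eadd` and removes one edge of the cycle it closes,
keeping feasibility, strictly decreases the objective. -/
def EdgeEdgeSwapOptimal (Eadd : Finset (Sym2 V)) (T : Finset (V × V))
    (obj : Finset (Sym2 V) → ℝ) (A : Finset (Sym2 V)) : Prop :=
  ∀ f ∈ Eadd, ∀ e, onFundCycle A f e →
    Feasible (A.erase e ∪ {f}) T → obj A ≤ obj (A.erase e ∪ {f})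

/-- Edge/set swap optimality of `A` w.r.t. added edges from `Eadd` and objective `obj`:
no swap that adds an edge `f ∈ Eadd` and removes a set `S` of edges of the cycle it closes,
keeping feasibility, strictly decreases the objective. -/
def EdgeSetSwapOptimal (Eadd : Finset (Sym2 V)) (T : Finset (V × V))
    (obj : Finset (Sym2 V) → ℝ) (A : Finset (Sym2 V)) : Prop :=
  ∀ f ∈ Eadd, ∀ S ⊆ A, (∀ e ∈ S, onFundCycle A f e) →
    Feasible ((A \ S) ∪ {f}) T → obj A ≤ obj ((A \ S) ∪ {f})

/-- Removing swap optimality: deleting any (feasibility preserving) edge set from `A`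
does not strictly decrease the objective. -/
def RemovingSwapOptimal (T : Finset (V × V))
    (obj : Finset (Sym2 V) → ℝ) (A : Finset (Sym2 V)) : Prop :=
  ∀ S ⊆ A, Feasible (A \ S) T → obj A ≤ obj (A \ S)

/-- Path/set swap optimality of `A`: for vertices `u, v` in the same component of `A`,
adding a set `P ⊆ Eadd` of edges (along a `u`–`v` connection) and removing a set `S` of
edges of the component of `u`, in a way that keeps `u,v` connected and the solution
feasible, does not strictly decrease the objective. -/
def PathSetSwapOptimal (Eadd : Finset (Sym2 V)) (T : Finset (V × V))
    (obj : Finset (Sym2 V) → ℝ) (A : Finset (Sym2 V)) : Prop :=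
  ∀ u v : V, (graphOf A).Reachable u v →
    ∀ P : Finset (Sym2 V), P ⊆ Eadd → ∀ S ⊆ A,
      (∀ e ∈ S, ∃ x ∈ e, (graphOf A).Reachable u x) →
      (graphOf ((A \ S) ∪ P)).Reachable u v →
      Feasible ((A \ S) ∪ P) T → obj A ≤ obj ((A \ S) ∪ P)

/-- A connected component `c` of `A ∖ S` is an *inner* component for the class `S`
if it touches (at least) two distinct edges of `S`. -/
def innerComp (A S : Finset (Sym2 V)) (c : (graphOf (A \ S)).ConnectedComponent) : Prop :=
  ∃ e ∈ S, ∃ e' ∈ S, e ≠ e' ∧ (∃ x ∈ e, (graphOf (A \ S)).connectedComponentMk x = c) ∧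
    ∃ y ∈ e', (graphOf (A \ S)).connectedComponentMk y = c

/-- The sum of the widths of the inner components `E_{S,i}`, `i ∈ In_S`, of the class `S`. -/
noncomputable def innerWidthSum (Eall : Finset (Sym2 V)) (d : Sym2 V → ℝ) (T : Finset (V × V))
    (A S : Finset (Sym2 V)) : ℝ :=
  ∑ᶠ c : (graphOf (A \ S)).ConnectedComponent,
    if innerComp A S c then widthSet Eall d T c.supp else 0

/-- `index(E')` for a vertex set `W`: the largest index `i` (in the enumeration `tp` of the
terminal pairs by nondecreasing distance) of a terminal pair lying entirely inside `W`. -/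
noncomputable def idxOf {nt : ℕ} (tp : Fin nt → V × V) (W : Set V) : ℕ :=
  sSup {i : ℕ | ∃ h : i < nt, (tp ⟨i, h⟩).1 ∈ W ∧ (tp ⟨i, h⟩).2 ∈ W}

/-- The finite vertex support of an edge set. -/
def suppF (B : Finset (Sym2 V)) : Finset V :=
  Finset.univ.filter (fun v => ∃ e ∈ B, v ∈ e)

/-- `e` crosses between two different connected components of `A`. -/
def crossingEdge (A : Finset (Sym2 V)) (e : Sym2 V) : Prop :=
  ∀ x y : V, e = s(x, y) → ¬ (graphOf A).Reachable x y

/-- The components of `A` touched by the edge set `B`, i.e. the nodes of `G_A`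
incident to `B`. -/
noncomputable def touched (A B : Finset (Sym2 V)) :
    Finset ((graphOf A).ConnectedComponent) :=
  (suppF B).image ((graphOf A).connectedComponentMk)

/-- `B` is (the edge set of) a tree in the contracted multigraph `G_A`: all its edges cross
between components of `A`, it is connected (through the components of `A` it touches), and
it has one edge less than the number of components it touches. -/
def IsGATree (A B : Finset (Sym2 V)) : Prop :=
  (∀ e ∈ B, crossingEdge A e) ∧ (touched A B).card = B.card + 1 ∧
    ∀ x ∈ suppF B, ∀ y ∈ suppF B, (graphOf (A ∪ B)).Reachable x y

/-- `A` is `c`-approximate connecting move optimal: for every tree `B` in `G_A` (with edges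
taken from `Emoves`), the total width of the components it connects, minus the largest of
these widths, is at most `c` times the length of the tree. -/
def ConnApproxOptimal (Emoves Eall : Finset (Sym2 V)) (d : Sym2 V → ℝ) (T : Finset (V × V))
    (c : ℝ) (A : Finset (Sym2 V)) : Prop :=
  ∀ B ⊆ Emoves, IsGATree A B →
    (∑ t ∈ touched A B, widthSet Eall d T t.supp)
      - (⨆ t ∈ touched A B, widthSet Eall d T t.supp) ≤ c * ∑ e ∈ B, d e


/-!
Remove the whole class `S` from the tree `A` and add `f = s(x, y)`. Every edge of `S` lies on
the `x`–`y` path of `A`, so it splits the component of `x` into an `x`-side and a `y`-side, and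
any two of these splits are nested. The middle component `T_{e₀,j}` is the set of vertices on
which `e₀` and `j` disagree, so compatibility with `e₀` says that each `F`-edge is cut either by
every edge of `S` or by none. By nestedness an `F`-edge starting in an inner component of
`A \ S` cannot be cut by all of them, so it stays there; hence `(A \ S) ∪ {f}` connects every
`F`-path and is feasible.

The swap changes the cost by `d f - d(S)`. The new component through `x` and `y` has width at
most `w(A)`, and the other components are inner components of `A \ S` or isolated vertices, so
the width grows by at most `Σ_{i ∈ In_S} w(E_{S,i})`. Swap optimality then gives
`d(S) - Σ_{i ∈ In_S} w(E_{S,i}) ≤ d f`, and the factor `1/3` is then free as `d f ≥ 0`.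
-/

section GraphOf

omit [Fintype V] [DecidableEq V]

variable {B C : Finset (Sym2 V)} {g : Sym2 V} {u v : V}

lemma graphOf_mono (h : B ⊆ C) : graphOf B ≤ graphOf C :=
  fun _ _ hadj => ⟨hadj.1, h hadj.2⟩

lemma mem_edgeSet_graphOf : g ∈ (graphOf B).edgeSet ↔ ¬ g.IsDiag ∧ g ∈ B := by
  induction g using Sym2.ind with
  | _ a b => simp [graphOf]

lemma eq_of_reachable_of_notMem_supp (hu : u ∉ supp B) (h : (graphOf B).Reachable u v) :
    u = v := by
  obtain ⟨_ | ⟨hadj, _⟩⟩ := h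
  · rfl
  · exact absurd ⟨_, hadj.2, Sym2.mem_mk_left _ _⟩ hu

lemma supp_connectedComponentMk_eq_singleton (hu : u ∉ supp B) :
    ((graphOf B).connectedComponentMk u).supp = {u} := by
  ext v
  rw [SimpleGraph.ConnectedComponent.mem_supp_iff, SimpleGraph.ConnectedComponent.eq,
    Set.mem_singleton_iff]
  exact ⟨fun h => (eq_of_reachable_of_notMem_supp hu h.symm).symm, fun h => h ▸ .refl _⟩

lemma SimpleGraph.Reachable.of_adj_reachable {G G' : SimpleGraph V}
    (h : ∀ a b, G.Adj a b → G'.Reachable a b) (huv : G.Reachable u v) : G'.Reachable u v := by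
  rw [SimpleGraph.reachable_iff_reflTransGen] at huv
  induction huv with
  | refl => rfl
  | tail _ hbc ih => exact ih.trans (h _ _ hbc)

end GraphOf

section Reachability

omit [Fintype V]

variable {B C S : Finset (Sym2 V)} {g : Sym2 V} {u v x y : V}

lemma reachable_of_mem_of_mem (hg : g ∈ B) (hu : u ∈ g) (hv : v ∈ g) :
    (graphOf B).Reachable u v := by
  by_cases huv : u = v
  · exact huv ▸ .refl u
  · exact SimpleGraph.Adj.reachable ⟨huv, (Sym2.mem_and_mem_iff huv).1 ⟨hu, hv⟩ ▸ hg⟩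

lemma exists_crossing_edge_of_isPath : ∀ {u v : V} (p : (graphOf B).Walk u v), p.IsPath →
    ¬ (graphOf (B \ S)).Reachable u v →
    ∃ a b, s(a, b) ∈ S ∧ (graphOf (B \ S)).Reachable u a ∧
      (graphOf (B.erase s(a, b))).Reachable b v
  | _, _, .nil, _, hn => absurd (.refl _) hn
  | u, _, .cons (v := w) h p, hp, hn => by
    rw [SimpleGraph.Walk.cons_isPath_iff] at hp
    by_cases huw : s(u, w) ∈ S
    · refine ⟨u, w, huw, .refl u, ⟨p.transfer _ fun e he => ?_⟩⟩
      have hne : e ≠ s(u, w) := by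
        rintro rfl
        exact hp.2 (p.fst_mem_support_of_mem_edges he)
      obtain ⟨hdiag, heB⟩ := mem_edgeSet_graphOf.1 (p.edges_subset_edgeSet he)
      exact mem_edgeSet_graphOf.2 ⟨hdiag, Finset.mem_erase.2 ⟨hne, heB⟩⟩
    · have hadj : (graphOf (B \ S)).Adj u w := ⟨h.1, Finset.mem_sdiff.2 ⟨h.2, huw⟩⟩
      obtain ⟨a, b, hab, hwa, hbv⟩ :=
        exists_crossing_edge_of_isPath p hp.1 fun hwv => hn (hadj.reachable.trans hwv)
      exact ⟨a, b, hab, hadj.reachable.trans hwa, hbv⟩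

lemma exists_crossing_edge (h : (graphOf B).Reachable u v)
    (hn : ¬ (graphOf (B \ S)).Reachable u v) :
    ∃ a b, s(a, b) ∈ S ∧ (graphOf (B \ S)).Reachable u a ∧
      (graphOf (B.erase s(a, b))).Reachable b v :=
  let ⟨p⟩ := h
  exists_crossing_edge_of_isPath p.bypass p.bypass_isPath hn

lemma exists_eq_mk_of_not_reachable_erase (h : (graphOf B).Reachable u v)
    (hn : ¬ (graphOf (B.erase g)).Reachable u v) :
    ∃ a b, g = s(a, b) ∧ (graphOf (B.erase g)).Reachable u a ∧
      (graphOf (B.erase g)).Reachable b v := by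
  rw [← Finset.sdiff_singleton_eq_erase] at hn
  obtain ⟨a, b, hab, hua, hbv⟩ := exists_crossing_edge h hn
  rw [Finset.mem_singleton] at hab
  subst hab
  rw [Finset.sdiff_singleton_eq_erase] at hua
  exact ⟨a, b, rfl, hua, hbv⟩

lemma exists_mem_reachable_erase (h : (graphOf B).Reachable u v)
    (hn : ¬ (graphOf (B.erase g)).Reachable u v) :
    ∃ z ∈ g, (graphOf (B.erase g)).Reachable u z :=
  let ⟨a, _, hg, hua, _⟩ := exists_eq_mk_of_not_reachable_erase h hn
  ⟨a, hg ▸ Sym2.mem_mk_left _ _, hua⟩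

lemma reachable_union_singleton_iff (hx : ¬ (graphOf B).Reachable u x)
    (hy : ¬ (graphOf B).Reachable u y) :
    (graphOf (B ∪ {s(x, y)})).Reachable u v ↔ (graphOf B).Reachable u v := by
  have hle : graphOf ((B ∪ {s(x, y)}).erase s(x, y)) ≤ graphOf B :=
    graphOf_mono fun e he => by
      simpa [(Finset.mem_erase.1 he).1] using (Finset.mem_erase.1 he).2
  refine ⟨fun h => ?_, fun h => h.mono (graphOf_mono Finset.subset_union_left)⟩
  by_contra hn
  obtain ⟨z, hz, huz⟩ := exists_mem_reachable_erase h fun h' => hn (h'.mono hle)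
  rcases Sym2.mem_iff.1 hz with rfl | rfl
  exacts [hx (huz.mono hle), hy (huz.mono hle)]

lemma reachable_of_reachable_union_singleton (hBC : B ⊆ C) (hxy : (graphOf C).Reachable x y)
    (h : (graphOf (B ∪ {s(x, y)})).Reachable u v) : (graphOf C).Reachable u v :=
  h.of_adj_reachable fun a b hab => by
    rcases Finset.mem_union.1 hab.2 with h | h
    · exact SimpleGraph.Adj.reachable ⟨hab.1, hBC h⟩
    · rcases Sym2.eq_iff.1 (Finset.mem_singleton.1 h) with ⟨rfl, rfl⟩ | ⟨rfl, rfl⟩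
      exacts [hxy, hxy.symm]

lemma supp_connectedComponentMk_union_singleton (hx : ¬ (graphOf B).Reachable u x)
    (hy : ¬ (graphOf B).Reachable u y) :
    ((graphOf (B ∪ {s(x, y)})).connectedComponentMk u).supp =
      ((graphOf B).connectedComponentMk u).supp := by
  ext v
  simp only [SimpleGraph.ConnectedComponent.mem_supp_iff, SimpleGraph.ConnectedComponent.eq]
  rw [SimpleGraph.reachable_comm, reachable_union_singleton_iff hx hy,
    SimpleGraph.reachable_comm]

end Reachability

section Separation

omit [Fintype V]

variable {A F : Finset (Sym2 V)} {e e' j : Sym2 V} {a b p q u v w x y : V}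

def Separates (A : Finset (Sym2 V)) (j : Sym2 V) (x y : V) : Prop :=
  (graphOf A).Reachable x y ∧ ¬ (graphOf (A.erase j)).Reachable x y

lemma sdiff_pair_eq_erase_erase : A \ {e, j} = (A.erase e).erase j := by
  rw [Finset.sdiff_insert, Finset.sdiff_singleton_eq_erase, Finset.erase_right_comm]

lemma graphOf_erase_erase_le : graphOf ((A.erase e).erase j) ≤ graphOf (A.erase j) :=
  graphOf_mono (Finset.erase_subset_erase j (Finset.erase_subset e A))

namespace Separates

lemma symm (h : Separates A j x y) : Separates A j y x :=
  ⟨h.1.symm, fun h' => h.2 h'.symm⟩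

lemma not_reachable_of_eq_mk (h : Separates A j x y) (hj : j = s(a, b)) :
    ¬ (graphOf (A.erase j)).Reachable a b := by
  obtain ⟨a', b', hj', hxa, hby⟩ := exists_eq_mk_of_not_reachable_erase h.1 h.2
  intro hab
  rcases Sym2.eq_iff.1 (hj.symm.trans hj') with ⟨rfl, rfl⟩ | ⟨rfl, rfl⟩
  exacts [h.2 (hxa.trans (hab.trans hby)), h.2 (hxa.trans (hab.symm.trans hby))]

lemma reachable_or (h : Separates A j x y) (hv : (graphOf A).Reachable v x) :
    (graphOf (A.erase j)).Reachable v x ∨ (graphOf (A.erase j)).Reachable v y := by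
  obtain ⟨a, b, rfl, hxa, hby⟩ := exists_eq_mk_of_not_reachable_erase h.1 h.2
  by_contra! hn
  obtain ⟨z, hz, hvz⟩ := exists_mem_reachable_erase
    (hv.trans (hxa.mono (graphOf_mono (Finset.erase_subset _ _)))) fun h => hn.1 (h.trans hxa.symm)
  rcases Sym2.mem_iff.1 hz with rfl | rfl
  exacts [hn.1 (hvz.trans hxa.symm), hn.2 (hvz.trans hby)]

lemma reachable_right_iff (h : Separates A j x y) (hv : (graphOf A).Reachable v x) :
    (graphOf (A.erase j)).Reachable v y ↔ ¬ (graphOf (A.erase j)).Reachable v x :=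
  ⟨fun hy hx => h.2 (hx.symm.trans hy), (h.reachable_or hv).resolve_left⟩

lemma reachable_iff (h : Separates A j x y) (hp : (graphOf A).Reachable p x)
    (hq : (graphOf A).Reachable q x) :
    (graphOf (A.erase j)).Reachable p q ↔
      ((graphOf (A.erase j)).Reachable p x ↔ (graphOf (A.erase j)).Reachable q x) := by
  refine ⟨fun hpq => ⟨hpq.symm.trans, hpq.trans⟩, fun hiff => ?_⟩
  by_cases hpx : (graphOf (A.erase j)).Reachable p x
  · exact hpx.trans (hiff.1 hpx).symm
  · exact ((h.reachable_right_iff hp).2 hpx).trans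
      ((h.reachable_right_iff hq).2 (hiff.not.1 hpx)).symm

/-- The splits of `graphOf A` cut out by two edges separating `x` from `y` are nested. -/
lemma not_crossing (he : Separates A e x y) (he' : Separates A e' x y) (he'A : e' ∈ A)
    (hpy : (graphOf (A.erase e)).Reachable p y) (hpx : (graphOf (A.erase e')).Reachable p x)
    (hqx : (graphOf (A.erase e)).Reachable q x) (hqy : (graphOf (A.erase e')).Reachable q y) :
    False := by
  rcases eq_or_ne e' e with rfl | hne
  · exact he.2 (hpx.symm.trans hpy)
  have hle : graphOf ((A.erase e).erase e') ≤ graphOf (A.erase e) :=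
    graphOf_mono (Finset.erase_subset _ _)
  obtain ⟨z, hz, hyz⟩ := exists_mem_reachable_erase hpy.symm fun h =>
    he'.2 (hpx.symm.trans (h.mono graphOf_erase_erase_le).symm)
  obtain ⟨z', hz', hxz'⟩ := exists_mem_reachable_erase hqx.symm fun h =>
    he'.2 ((h.mono graphOf_erase_erase_le).trans hqy)
  exact he.2 (((hxz'.mono hle).trans (reachable_of_mem_of_mem
    (Finset.mem_erase.2 ⟨hne, he'A⟩) hz' hz)).trans (hyz.mono hle).symm)

lemma not_reachable_of_mem_of_mem (he : Separates A e x y) (hj : Separates A j x y)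
    (hne : e ≠ j) (heA : e ∈ A) (hjA : j ∈ A) (hp : p ∈ e) (hq : q ∈ j)
    (hpq : (graphOf ((A.erase e).erase j)).Reachable p q)
    (hpe : (graphOf (A.erase e)).Reachable p x) (hpj : (graphOf (A.erase j)).Reachable p x) :
    False := by
  have hle : graphOf ((A.erase e).erase j) ≤ graphOf (A.erase e) :=
    graphOf_mono (Finset.erase_subset _ _)
  obtain ⟨z, hz, hyz⟩ := exists_mem_reachable_erase
    (he.1.symm.trans (hpe.symm.mono (graphOf_mono (Finset.erase_subset _ _))))
    fun h => he.2 (hpe.symm.trans h.symm)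
  by_cases hyzK : (graphOf ((A.erase e).erase j)).Reachable y z
  · exact hj.2 ((hyzK.mono graphOf_erase_erase_le).trans ((reachable_of_mem_of_mem
      (Finset.mem_erase.2 ⟨hne, heA⟩) hz hp).trans hpj)).symm
  · obtain ⟨z', hz', hyz'⟩ := exists_mem_reachable_erase hyz hyzK
    exact he.2 ((hyz'.mono hle).trans ((reachable_of_mem_of_mem
      (Finset.mem_erase.2 ⟨hne.symm, hjA⟩) hz' hq).trans ((hpq.mono hle).symm.trans hpe))).symm

end Separates

lemma mem_midComp_of_reachable (hu : (graphOf (A.erase j)).Reachable v u)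
    (hu' : ¬ (graphOf (A.erase e)).Reachable v u) (hw : (graphOf (A.erase e)).Reachable v w)
    (hw' : ¬ (graphOf (A.erase j)).Reachable v w) : v ∈ midComp A e j := by
  obtain ⟨p, hp, hvp⟩ := exists_mem_reachable_erase hu fun h =>
    hu' (h.mono graphOf_erase_erase_le)
  obtain ⟨q, hq, hvq⟩ := exists_mem_reachable_erase hw fun h =>
    hw' (h.mono graphOf_erase_erase_le)
  rw [Finset.erase_right_comm] at hvp
  refine ⟨p, hp, q, hq, ?_, ?_⟩ <;> rw [sdiff_pair_eq_erase_erase]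
  exacts [hvp.symm.trans hvq, hvp.symm]

lemma mem_midComp_iff (he : Separates A e x y) (hj : Separates A j x y) (hne : e ≠ j)
    (heA : e ∈ A) (hjA : j ∈ A) (hv : (graphOf A).Reachable v x) :
    v ∈ midComp A e j ↔
      ¬ ((graphOf (A.erase e)).Reachable v x ↔ (graphOf (A.erase j)).Reachable v x) := by
  constructor
  · rintro ⟨p, hp, q, hq, hpq, hpv⟩ hiff
    rw [sdiff_pair_eq_erase_erase] at hpq hpv
    have hpve : (graphOf (A.erase e)).Reachable p v :=
      hpv.mono (graphOf_mono (Finset.erase_subset _ _))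
    have hpvj : (graphOf (A.erase j)).Reachable p v := hpv.mono graphOf_erase_erase_le
    by_cases hvx : (graphOf (A.erase e)).Reachable v x
    · exact he.not_reachable_of_mem_of_mem hj hne heA hjA hp hq hpq (hpve.trans hvx)
        (hpvj.trans (hiff.1 hvx))
    · exact he.symm.not_reachable_of_mem_of_mem hj.symm hne heA hjA hp hq hpq
        (hpve.trans ((he.reachable_right_iff hv).2 hvx))
        (hpvj.trans ((hj.reachable_right_iff hv).2 (hiff.not.1 hvx)))
  · intro hxor
    by_cases hvx : (graphOf (A.erase e)).Reachable v x
    · have hjx : ¬ (graphOf (A.erase j)).Reachable v x := fun h => hxor (iff_of_true hvx h)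
      exact mem_midComp_of_reachable ((hj.reachable_right_iff hv).2 hjx)
        ((he.reachable_right_iff hv).not.2 (not_not.2 hvx)) hvx hjx
    · have hjx : (graphOf (A.erase j)).Reachable v x := by
        by_contra h
        exact hxor (iff_of_false hvx h)
      exact mem_midComp_of_reachable hjx hvx ((he.reachable_right_iff hv).2 hvx)
        ((hj.reachable_right_iff hv).not.2 (not_not.2 hjx))

lemma Compatible.mem_midComp_iff_of_mem (h : Compatible A F e j) (hne : e ≠ j)
    (hpq : s(p, q) ∈ F) : p ∈ midComp A e j ↔ q ∈ midComp A e j := by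
  have hleave := h.resolve_left hne
  constructor
  · exact fun hp => by_contra fun hq => hleave ⟨_, hpq, p, q, rfl, hp, hq⟩
  · exact fun hq => by_contra fun hp => hleave ⟨_, hpq, q, p, Sym2.eq_swap, hq, hp⟩

lemma Compatible.reachable_erase_iff (h : Compatible A F e j) (he : Separates A e x y)
    (hj : Separates A j x y) (heA : e ∈ A) (hjA : j ∈ A) (hp : (graphOf A).Reachable p x)
    (hq : (graphOf A).Reachable q x) (hpq : s(p, q) ∈ F) :
    (graphOf (A.erase j)).Reachable p q ↔ (graphOf (A.erase e)).Reachable p q := by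
  rcases eq_or_ne e j with rfl | hne
  · rfl
  have hmid := h.mem_midComp_iff_of_mem hne hpq
  rw [mem_midComp_iff he hj hne heA hjA hp, mem_midComp_iff he hj hne heA hjA hq] at hmid
  rw [hj.reachable_iff hp hq, he.reachable_iff hp hq]
  tauto

end Separation

section SwapClass

omit [Fintype V]

variable {A F S : Finset (Sym2 V)} {T : Finset (V × V)} {e : Sym2 V} {p q u x y : V}

lemma exists_mk_mem_not_reachable_erase (hS : ∀ j ∈ S, Separates A j x y)
    (h : (graphOf A).Reachable p q) (hn : ¬ (graphOf (A \ S)).Reachable p q) :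
    ∃ a b, s(a, b) ∈ S ∧ (graphOf (A \ S)).Reachable p a ∧
      ¬ (graphOf (A.erase s(a, b))).Reachable p q := by
  obtain ⟨a, b, hab, hpa, hbq⟩ := exists_crossing_edge h hn
  refine ⟨a, b, hab, hpa, fun hpq => (hS _ hab).not_reachable_of_eq_mk rfl ?_⟩
  have hle : graphOf (A \ S) ≤ graphOf (A.erase s(a, b)) := by
    rw [Finset.erase_eq]
    exact graphOf_mono (Finset.sdiff_subset_sdiff le_rfl (Finset.singleton_subset_iff.2 hab))
  exact (hpa.mono hle).symm.trans (hpq.trans hbq.symm)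

lemma innerComp_of_not_reachable (hS : ∀ j ∈ S, Separates A j x y)
    (hu : (graphOf A).Reachable u x) (hux : ¬ (graphOf (A \ S)).Reachable u x)
    (huy : ¬ (graphOf (A \ S)).Reachable u y) :
    innerComp A S ((graphOf (A \ S)).connectedComponentMk u) := by
  obtain ⟨a, b, hab, hua, hx⟩ := exists_mk_mem_not_reachable_erase hS hu hux
  obtain ⟨a', b', hab', hua', hy⟩ :=
    exists_mk_mem_not_reachable_erase hS (hu.trans (hS _ hab).1) huy
  refine ⟨_, hab, _, hab', fun heq => ?_,
    ⟨a, Sym2.mem_mk_left _ _, SimpleGraph.ConnectedComponent.eq.2 hua.symm⟩,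
    a', Sym2.mem_mk_left _ _, SimpleGraph.ConnectedComponent.eq.2 hua'.symm⟩
  rw [heq] at hx
  exact ((hS _ hab').reachable_or hu).elim hx hy

/-- If an edge of `S` cut the `F`-edge `s(p, q)`, compatibility with `e` would make every edge
of `S` cut it, which the nested splits of the two edges of `S` bounding the component of `p`
forbid. -/
lemma reachable_sdiff_of_compatible (hS : ∀ j ∈ S, j ∈ A ∧ Separates A j x y)
    (hc : ∀ j ∈ S, Compatible A F e j) (he : e ∈ S) (hp : (graphOf A).Reachable p x)
    (hq : (graphOf A).Reachable q x) (hpx : ¬ (graphOf (A \ S)).Reachable p x)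
    (hpy : ¬ (graphOf (A \ S)).Reachable p y) (hpq : s(p, q) ∈ F) :
    (graphOf (A \ S)).Reachable p q := by
  have hsep : ∀ j ∈ S, Separates A j x y := fun j hj => (hS j hj).2
  have hcut : ∀ j ∈ S,
      (graphOf (A.erase j)).Reachable p q ↔ (graphOf (A.erase e)).Reachable p q :=
    fun j hj => (hc j hj).reachable_erase_iff (hsep e he) (hsep j hj) (hS e he).1 (hS j hj).1
      hp hq hpq
  by_contra hn
  obtain ⟨_, _, hj, -, hpqj⟩ := exists_mk_mem_not_reachable_erase hsep (hp.trans hq.symm) hn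
  have hcross : ∀ k ∈ S, ¬ (graphOf (A.erase k)).Reachable p q :=
    fun k hk => (hcut k hk).not.2 ((hcut _ hj).not.1 hpqj)
  obtain ⟨_, _, hk, -, hpk⟩ := exists_mk_mem_not_reachable_erase hsep hp hpx
  obtain ⟨_, _, hk', -, hpk'⟩ :=
    exists_mk_mem_not_reachable_erase hsep (hp.trans (hsep e he).1) hpy
  have hpy' := ((hsep _ hk).reachable_or hp).resolve_left hpk
  have hpx' := ((hsep _ hk').reachable_or hp).resolve_right hpk'
  exact (hsep _ hk).not_crossing (hsep _ hk') (hS _ hk').1 hpy' hpx'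
    (((hsep _ hk).reachable_or hq).resolve_right fun hqy => hcross _ hk (hpy'.trans hqy.symm))
    (((hsep _ hk').reachable_or hq).resolve_left fun hqx => hcross _ hk' (hpx'.trans hqx.symm))

lemma feasible_sdiff_union_of_compatible (hS : ∀ j ∈ S, j ∈ A ∧ Separates A j x y)
    (hc : ∀ j ∈ S, Compatible A F e j) (he : e ∈ S) (hF : Feasible F T)
    (hFA : ∀ p ∈ supp F, (graphOf A).Reachable p x) : Feasible ((A \ S) ∪ {s(x, y)}) T := by
  have hle : graphOf (A \ S) ≤ graphOf ((A \ S) ∪ {s(x, y)}) :=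
    graphOf_mono Finset.subset_union_left
  have hxy : (graphOf ((A \ S) ∪ {s(x, y)})).Reachable x y :=
    reachable_of_mem_of_mem (Finset.mem_union_right _ (Finset.mem_singleton_self _))
      (Sym2.mem_mk_left x y) (Sym2.mem_mk_right x y)
  have hedge : ∀ p q, s(p, q) ∈ F → ¬ (graphOf ((A \ S) ∪ {s(x, y)})).Reachable p x →
      (graphOf ((A \ S) ∪ {s(x, y)})).Reachable p q := fun p q hpq hpx =>
    (reachable_sdiff_of_compatible hS hc he (hFA p ⟨_, hpq, Sym2.mem_mk_left p q⟩)
      (hFA q ⟨_, hpq, Sym2.mem_mk_right p q⟩) (fun h => hpx (h.mono hle))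
      (fun h => hpx ((h.mono hle).trans hxy.symm)) hpq).mono hle
  refine fun t ht => (hF t ht).of_adj_reachable fun p q hpq => ?_
  by_cases hpx : (graphOf ((A \ S) ∪ {s(x, y)})).Reachable p x
  · by_cases hqx : (graphOf ((A \ S) ∪ {s(x, y)})).Reachable q x
    · exact hpx.trans hqx.symm
    · exact (hedge q p (Sym2.eq_swap ▸ hpq.2) hqx).symm
  · exact hedge p q hpq.2 hpx

end SwapClass

section Width

variable {Eall : Finset (Sym2 V)} {d : Sym2 V → ℝ} {T : Finset (V × V)}

section

omit [Fintype V] [DecidableEq V]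

lemma walk_sum_nonneg (hd : ∀ e, 0 ≤ d e) {G : SimpleGraph V} {u v : V} (p : G.Walk u v) :
    0 ≤ (p.edges.map d).sum :=
  List.sum_nonneg fun _ hz => by
    obtain ⟨e, -, rfl⟩ := List.mem_map.1 hz
    exact hd e

lemma wdist_nonneg (hd : ∀ e, 0 ≤ d e) (u v : V) : 0 ≤ wdist Eall d u v :=
  Real.iInf_nonneg fun p => walk_sum_nonneg hd p

lemma wdist_self (hd : ∀ e, 0 ≤ d e) (u : V) : wdist Eall d u u = 0 := by
  refine le_antisymm ?_ (wdist_nonneg hd u u)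
  have hbdd : BddBelow (Set.range fun p : (graphOf Eall).Walk u u => (p.edges.map d).sum) :=
    ⟨0, by rintro _ ⟨p, rfl⟩; exact walk_sum_nonneg hd p⟩
  exact (ciInf_le hbdd .nil).trans_eq (by simp)

lemma widthSet_bddAbove (W : Set V) :
    BddAbove {z : ℝ | ∃ p ∈ T, p.1 ∈ W ∧ p.2 ∈ W ∧ z = wdist Eall d p.1 p.2} :=
  ((T.finite_toSet.image fun p => wdist Eall d p.1 p.2).subset <| by
    rintro _ ⟨p, hp, -, -, rfl⟩
    exact ⟨p, hp, rfl⟩).bddAbove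

lemma widthSet_nonneg (hd : ∀ e, 0 ≤ d e) (W : Set V) : 0 ≤ widthSet Eall d T W :=
  Real.sSup_nonneg fun _ ⟨_, _, _, _, hz⟩ => hz ▸ wdist_nonneg hd _ _

lemma widthSet_mono (hd : ∀ e, 0 ≤ d e) {W W' : Set V} (h : W ⊆ W') :
    widthSet Eall d T W ≤ widthSet Eall d T W' :=
  Real.sSup_le
    (fun _ ⟨p, hp, h₁, h₂, hz⟩ => le_csSup (widthSet_bddAbove W') ⟨p, hp, h h₁, h h₂, hz⟩)
    (widthSet_nonneg hd W')

lemma widthSet_singleton (hd : ∀ e, 0 ≤ d e) (u : V) : widthSet Eall d T {u} = 0 :=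
  le_antisymm (Real.sSup_le (fun _ ⟨p, _, h₁, h₂, hz⟩ => by
    rw [hz, Set.mem_singleton_iff.1 h₁, Set.mem_singleton_iff.1 h₂, wdist_self hd]) le_rfl)
    (widthSet_nonneg hd _)

end

section

omit [Fintype V]

variable {A S : Finset (Sym2 V)} {u x y : V}

lemma widthSet_le_ite_innerComp (hd : ∀ e, 0 ≤ d e) (hS : ∀ j ∈ S, Separates A j x y)
    (hA : ∀ v ∈ supp A, (graphOf A).Reachable v x)
    (hux : ¬ (graphOf ((A \ S) ∪ {s(x, y)})).Reachable u x) :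
    widthSet Eall d T ((graphOf ((A \ S) ∪ {s(x, y)})).connectedComponentMk u).supp ≤
      if innerComp A S ((graphOf (A \ S)).connectedComponentMk u) then
        widthSet Eall d T ((graphOf (A \ S)).connectedComponentMk u).supp else 0 := by
  have hle := graphOf_mono (Finset.subset_union_left (s₁ := A \ S) (s₂ := {s(x, y)}))
  have hux' : ¬ (graphOf (A \ S)).Reachable u x := fun h => hux (h.mono hle)
  have huy' : ¬ (graphOf (A \ S)).Reachable u y := fun h => hux ((h.mono hle).trans
    (reachable_of_mem_of_mem (Finset.mem_union_right _ (Finset.mem_singleton_self _))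
      (Sym2.mem_mk_right x y) (Sym2.mem_mk_left x y)))
  rw [supp_connectedComponentMk_union_singleton hux' huy']
  by_cases hu : u ∈ supp A
  · rw [if_pos (innerComp_of_not_reachable hS (hA u hu) hux' huy')]
  · have hu' : u ∉ supp (A \ S) := fun ⟨g, hg, hug⟩ =>
      hu ⟨g, (Finset.mem_sdiff.1 hg).1, hug⟩
    rw [supp_connectedComponentMk_eq_singleton hu', widthSet_singleton hd]
    split_ifs <;> exact le_rfl

end

variable {A B S : Finset (Sym2 V)} {x y : V}

lemma widthSet_le_totalWidth (hd : ∀ e, 0 ≤ d e) (c : (graphOf B).ConnectedComponent) :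
    widthSet Eall d T c.supp ≤ totalWidth Eall d T B := by
  rw [totalWidth, finsum_eq_sum_of_fintype]
  exact Finset.single_le_sum (fun c _ => widthSet_nonneg hd _) (Finset.mem_univ c)

/-- Apart from the component through `s(x, y)`, the components of `(A \ S) ∪ {s(x, y)}` are
components of `A \ S` that are either inner or isolated vertices. -/
lemma totalWidth_sdiff_union_le (hd : ∀ e, 0 ≤ d e) (hS : ∀ j ∈ S, Separates A j x y)
    (hA : ∀ v ∈ supp A, (graphOf A).Reachable v x) (hxy : (graphOf A).Reachable x y) :
    totalWidth Eall d T ((A \ S) ∪ {s(x, y)}) ≤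
      widthSet Eall d T ((graphOf A).connectedComponentMk x).supp +
        innerWidthSum Eall d T A S := by
  set H := graphOf (A \ S)
  set G := graphOf ((A \ S) ∪ {s(x, y)})
  have hle : H ≤ G := graphOf_mono Finset.subset_union_left
  set cx := G.connectedComponentMk x
  let w : G.ConnectedComponent → ℝ := fun c => widthSet Eall d T c.supp
  let inner : H.ConnectedComponent → ℝ := fun c =>
    if innerComp A S c then widthSet Eall d T c.supp else 0
  let φ := SimpleGraph.ConnectedComponent.map (SimpleGraph.Hom.ofLE hle)
  have hφ : Function.Surjective φ := fun c => c.ind fun v => ⟨H.connectedComponentMk v, rfl⟩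
  have hcx : w cx ≤ widthSet Eall d T ((graphOf A).connectedComponentMk x).supp :=
    widthSet_mono hd fun v hv => SimpleGraph.ConnectedComponent.eq.2
      (reachable_of_reachable_union_singleton Finset.sdiff_subset hxy
        (SimpleGraph.ConnectedComponent.eq.1 hv))
  have hrest : ∀ c, (if φ c = cx then 0 else w (φ c)) ≤ inner c := by
    refine fun c => c.ind fun u => ?_
    change (if G.connectedComponentMk u = cx then 0 else w (G.connectedComponentMk u)) ≤ _
    split_ifs with hu
    · by_cases hc : innerComp A S (H.connectedComponentMk u) <;>
        simp only [inner, hc, if_true, if_false, le_refl, widthSet_nonneg hd]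
    · exact widthSet_le_ite_innerComp hd hS hA
        fun h => hu (SimpleGraph.ConnectedComponent.eq.2 h)
  calc totalWidth Eall d T ((A \ S) ∪ {s(x, y)})
      = ∑ c, ((if c = cx then w cx else 0) + if c = cx then 0 else w c) := by
        rw [totalWidth, finsum_eq_sum_of_fintype]
        exact Finset.sum_congr rfl fun c _ => by split_ifs with h <;> simp [w, h]
    _ = w cx + ∑ c ∈ Finset.univ.image φ, if c = cx then 0 else w c := by
        rw [Finset.sum_add_distrib, Finset.sum_ite_eq', if_pos (Finset.mem_univ _),
          Finset.image_univ_of_surjective hφ]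
    _ ≤ w cx + ∑ c, if φ c = cx then 0 else w (φ c) := by
        gcongr
        exact Finset.sum_image_le_of_nonneg fun c _ => by
          split_ifs <;> simp only [le_refl, w, widthSet_nonneg hd]
    _ ≤ widthSet Eall d T ((graphOf A).connectedComponentMk x).supp +
          innerWidthSum Eall d T A S := by
        rw [innerWidthSum, finsum_eq_sum_of_fintype]
        exact add_le_add hcx (Finset.sum_le_sum fun c _ => hrest c)

end Width

omit [Fintype V] in
lemma cost_sdiff_union_le {d : Sym2 V → ℝ} (hd : ∀ e, 0 ≤ d e) {A S : Finset (Sym2 V)}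
    (hSA : S ⊆ A) (f : Sym2 V) :
    cost d ((A \ S) ∪ {f}) ≤ cost d A - ∑ e ∈ S, d e + d f := by
  rw [cost, cost, ← Finset.sum_sdiff_eq_sub hSA, ← Finset.sum_singleton d f]
  linarith [Finset.sum_union_inter (s₁ := A \ S) (s₂ := {f}) (f := d),
    Finset.sum_nonneg fun e (_ : e ∈ (A \ S) ∩ {f}) => hd e]

theorem stmt9_swap_with_three_pieces_general
    (Eall : Finset (Sym2 V)) (d : Sym2 V → ℝ) (hd : ∀ e, 0 ≤ d e)
    (T : Finset (V × V)) (A F : Finset (Sym2 V))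
    (hFfeas : Feasible F T)
    (hAtree : IsTreeSol A) (hsupp : supp A = supp F)
    (hes : EdgeSetSwapOptimal F T (phi Eall d T) A)
    (e₀ : Sym2 V) (he₀ : e₀ ∈ A)
    (S : Finset (Sym2 V)) (hS : S = cls A F e₀)
    (f : Sym2 V) (hf : f ∈ F) (hcyc : ∀ e ∈ S, onFundCycle A f e) :
    (1 / 3) * ((∑ e ∈ S, d e) - innerWidthSum Eall d T A S) ≤ d f := by
  induction f using Sym2.ind with | _ x y => ?_
  have hsep : ∀ j ∈ S, j ∈ A ∧ Separates A j x y :=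
    fun j hj => ⟨(hcyc j hj).1, (hcyc j hj).2 x y rfl⟩
  have he₀S : e₀ ∈ S := hS ▸ Finset.mem_filter.2 ⟨he₀, Or.inl rfl⟩
  have hc : ∀ j ∈ S, Compatible A F e₀ j := fun j hj => (Finset.mem_filter.1 (hS ▸ hj)).2
  have hx : x ∈ supp A := hsupp ▸ ⟨_, hf, Sym2.mem_mk_left x y⟩
  have hA : ∀ v ∈ supp A, (graphOf A).Reachable v x := fun v hv => hAtree.2.2 v hv x hx
  have hswap := hes _ hf S (fun j hj => (hsep j hj).1) hcyc
    (feasible_sdiff_union_of_compatible hsep hc he₀S hFfeas fun p hp => hA p (hsupp ▸ hp))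
  have hcost := cost_sdiff_union_le hd (fun j hj => (hsep j hj).1) s(x, y)
  have hwidth := totalWidth_sdiff_union_le (Eall := Eall) (T := T) hd (fun j hj => (hsep j hj).2)
    hA (hsep e₀ he₀S).2.1
  have hwidthA := widthSet_le_totalWidth (Eall := Eall) (T := T) hd
    ((graphOf A).connectedComponentMk x)
  rw [phi, phi] at hswap
  linarith [hd s(x, y)]

theorem stmt9_swap_with_three_pieces
    (Eall : Finset (Sym2 V)) (d : Sym2 V → ℝ) (hd : ∀ e, 0 ≤ d e)
    (T : Finset (V × V)) (A F : Finset (Sym2 V))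
    (hAE : A ⊆ Eall) (hFE : F ⊆ Eall)
    (hAfeas : Feasible A T) (hFfeas : Feasible F T)
    (hAtree : IsTreeSol A) (hsupp : supp A = supp F)
    (hes : EdgeSetSwapOptimal F T (phi Eall d T) A)
    (e₀ : Sym2 V) (he₀ : e₀ ∈ A)
    (S : Finset (Sym2 V)) (hS : S = cls A F e₀) (hSu : S ≠ unsafeCls A F)
    (f : Sym2 V) (hf : f ∈ F) (hcyc : ∀ e ∈ S, onFundCycle A f e) :
    (1 / 3) * ((∑ e ∈ S, d e) - innerWidthSum Eall d T A S) ≤ d f :=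
  stmt9_swap_with_three_pieces_general Eall d hd T A F hFfeas hAtree hsupp hes e₀ he₀ S hS f hf hcyc
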